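/- arXiv:2110.07781 — 2 statements merged into one kernel-verified Lean document; each statement's English description precedes it below -/
import Mathlib

section
/- The set of nonzero complex numbers α for which χ(ψ_α ⊗ ψ_α) < 4 is finite. -/
open scoped BigOperators Classical

noncomputable section

namespace StabPaper

/-- The space `𝔽₂ⁿ` of length-`n` bitstrings. -/
abbrev F2 (n : ℕ) := Fin n → ZMod 2

/-- `A ⊆ 𝔽₂ⁿ` is a (nonempty) affine linear subspace. -/
def IsAffineSubspace {n : ℕ} (A : Set (F2 n)) : Prop :=
  A.Nonempty ∧ ∀ x ∈ A, ∀ y ∈ A, ∀ z ∈ A, x + y + z ∈ A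

/-- `l : 𝔽₂ⁿ → 𝔽₂` is a linear form. -/
def IsLinearForm {n : ℕ} (l : F2 n → ZMod 2) : Prop :=
  ∀ x y, l (x + y) = l x + l y

/-- `q : 𝔽₂ⁿ → 𝔽₂` is a quadratic form (polynomial of degree at most 2
with vanishing constant term). -/
def IsQuadraticForm {n : ℕ} (q : F2 n → ZMod 2) : Prop :=
  q 0 = 0 ∧ ∀ x y z, q (x + y + z) = q (x + y) + q (x + z) + q (y + z) + q x + q y + q z

/-- A stabilizer state vector on `n` qubits. -/
def IsStabilizerState {n : ℕ} (σ : F2 n → ℂ) : Prop :=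
  ∃ (A : Set (F2 n)) (l q : F2 n → ZMod 2),
    IsAffineSubspace A ∧ IsLinearForm l ∧ IsQuadraticForm q ∧
    ∀ x, σ x = if x ∈ A then Complex.I ^ (l x).val * (-1 : ℂ) ^ (q x).val else 0

/-- A real stabilizer state vector on `n` qubits (the case `l = 0`). -/
def IsRealStabilizerState {n : ℕ} (σ : F2 n → ℂ) : Prop :=
  ∃ (A : Set (F2 n)) (q : F2 n → ZMod 2),
    IsAffineSubspace A ∧ IsQuadraticForm q ∧
    ∀ x, σ x = if x ∈ A then (-1 : ℂ) ^ (q x).val else 0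

/-- The stabilizer rank: the least `r` such that `ψ` is a `ℂ`-linear combination of
`r` stabilizer state vectors. -/
def stabRank {n : ℕ} (ψ : F2 n → ℂ) : ℕ :=
  sInf {r : ℕ | ∃ (c : Fin r → ℂ) (σ : Fin r → (F2 n → ℂ)),
    (∀ i, IsStabilizerState (σ i)) ∧ ψ = ∑ i, c i • σ i}

/-- The real stabilizer rank: the least `r` such that `ψ` is a `ℂ`-linear combination of
`r` real stabilizer state vectors. -/
def realStabRank {n : ℕ} (ψ : F2 n → ℂ) : ℕ :=
  sInf {r : ℕ | ∃ (c : Fin r → ℂ) (σ : Fin r → (F2 n → ℂ)),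
    (∀ i, IsRealStabilizerState (σ i)) ∧ ψ = ∑ i, c i • σ i}

/-- The `n`-fold tensor power of a one-qubit vector `ψ : ℂ²`. -/
def tensorPow (ψ : ZMod 2 → ℂ) (n : ℕ) : F2 n → ℂ := fun x => ∏ i, ψ (x i)

/-- The Euclidean norm on `ℂ^{𝔽₂ⁿ}`. -/
def l2norm {n : ℕ} (φ : F2 n → ℂ) : ℝ := Real.sqrt (∑ x, ‖φ x‖ ^ 2)

/-- The δ-approximate stabilizer rank. -/
def approxStabRank {n : ℕ} (δ : ℝ) (ψ : F2 n → ℂ) : ℕ :=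
  sInf {r : ℕ | ∃ φ : F2 n → ℂ, φ ≠ 0 ∧
    l2norm (fun x => ((l2norm φ : ℝ) : ℂ)⁻¹ * φ x - ((l2norm ψ : ℝ) : ℂ)⁻¹ * ψ x) < δ ∧
    stabRank φ = r}

/-- The one-qubit vector `a·e₀ + b·e₁ ∈ ℂ²`. -/
def qubit (a b : ℂ) : ZMod 2 → ℂ := fun x => if x = 0 then a else b

/-- A nonzero `ψ ∈ ℂ²` is a one-qubit stabilizer state vector iff it is proportional to
one of `e₀, e₁, e₀+e₁, e₀−e₁, e₀+i·e₁, e₀−i·e₁`. -/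
def IsQubitStabVec (ψ : ZMod 2 → ℂ) : Prop :=
  ∃ c : ℂ, c ≠ 0 ∧ (ψ = c • qubit 1 0 ∨ ψ = c • qubit 0 1 ∨ ψ = c • qubit 1 1 ∨
    ψ = c • qubit 1 (-1) ∨ ψ = c • qubit 1 Complex.I ∨ ψ = c • qubit 1 (-Complex.I))

/-- The `n`-th generic stabilizer rank `χ_n`. -/
def genStabRank (n : ℕ) : ℕ :=
  sSup {r : ℕ | ∃ ψ : ZMod 2 → ℂ, ψ ≠ 0 ∧ stabRank (tensorPow ψ n) = r}

/-- The `n`-th generic real stabilizer rank `χ_nℝ`. -/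
def genRealStabRank (n : ℕ) : ℕ :=
  sSup {r : ℕ | ∃ ψ : ZMod 2 → ℂ, ψ ≠ 0 ∧ realStabRank (tensorPow ψ n) = r}


/-- The two-qubit state `ψ_α` with `ψ_α(00) = 1`, `ψ_α(01) = ψ_α(10) = α`, `ψ_α(11) = 0`. -/
def psiAlpha (α : ℂ) : F2 2 → ℂ := fun x =>
  if x 0 = 0 ∧ x 1 = 0 then 1 else if x 0 = 1 ∧ x 1 = 1 then 0 else α

/-- The tensor product of two two-qubit states, as a four-qubit state. -/
def tensor2 (φ ρ : F2 2 → ℂ) : F2 4 → ℂ := fun x =>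
  φ (fun i => x (Fin.castAdd 2 i)) * ρ (fun j => x (Fin.natAdd 2 j))

/-!
Write `ψ_α ⊗ ψ_α = u₀ + α u₁ + α² u₂` with `u₀, u₁, u₂` linearly independent
(`uₖ = psiSqCoeff k`). There are only finitely many stabilizer states, hence finitely many spans
`V` of at most three of them, and it suffices that each `V` contains `ψ_α ⊗ ψ_α` for finitely many
`α` only. Otherwise, inverting a Vandermonde system, `u₀, u₁, u₂ ∈ V`, and
`V = span {u₀, u₁, u₂}` by dimension. A stabilizer state `σ = c₀ u₀ + c₁ u₁ + c₂ u₂` in this span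
equals `c₁` at `0001, 0010, 0100` and `0` at their sum `0111`; as its support is affine, `c₁ = 0`.
So all of `V` vanishes at `0001`, while `u₁` does not.
-/

open Submodule

theorem IsStabilizerState.apply_add_add_ne_zero {n : ℕ} {σ : F2 n → ℂ}
    (hσ : IsStabilizerState σ) {x y z : F2 n} (hx : σ x ≠ 0) (hy : σ y ≠ 0) (hz : σ z ≠ 0) :
    σ (x + y + z) ≠ 0 := by
  obtain ⟨A, l, q, hA, -, -, hσ⟩ := hσ
  have hsupp : ∀ w, σ w ≠ 0 ↔ w ∈ A := fun w => by
    rw [hσ w]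
    split_ifs with hw
    · simp [hw, Complex.I_ne_zero]
    · simp [hw]
  rw [hsupp] at hx hy hz ⊢
  exact hA.2 x hx y hy z hz

theorem setOf_isStabilizerState_finite (n : ℕ) : {σ : F2 n → ℂ | IsStabilizerState σ}.Finite := by
  refine (Set.finite_range fun p : Set (F2 n) × (F2 n → ZMod 2) × (F2 n → ZMod 2) =>
    fun x => if x ∈ p.1 then Complex.I ^ (p.2.1 x).val * (-1 : ℂ) ^ (p.2.2 x).val else 0).subset ?_
  rintro σ ⟨A, l, q, -, -, -, hσ⟩
  exact ⟨(A, l, q), (funext hσ).symm⟩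

theorem isStabilizerState_single {n : ℕ} (y : F2 n) : IsStabilizerState (Pi.single y (1 : ℂ)) := by
  have hyy : y + y = 0 := funext fun i => CharTwo.add_self_eq_zero (y i)
  refine ⟨{y}, 0, 0, ⟨⟨y, rfl⟩, ?_⟩, fun _ _ => by simp, ⟨rfl, fun _ _ _ => by simp⟩, fun x => ?_⟩
  · rintro _ rfl _ rfl _ rfl
    simp [hyy]
  · by_cases hx : x = y <;> simp [hx]

theorem exists_sum_eq_of_stabRank {n : ℕ} (ψ : F2 n → ℂ) :
    ∃ (c : Fin (stabRank ψ) → ℂ) (σ : Fin (stabRank ψ) → F2 n → ℂ),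
      (∀ i, IsStabilizerState (σ i)) ∧ ψ = ∑ i, c i • σ i := by
  refine Nat.sInf_mem (s := {r : ℕ | ∃ (c : Fin r → ℂ) (σ : Fin r → F2 n → ℂ),
    (∀ i, IsStabilizerState (σ i)) ∧ ψ = ∑ i, c i • σ i}) ⟨Fintype.card (F2 n), ?_⟩
  let e := (Fintype.equivFin (F2 n)).symm
  refine ⟨fun i => ψ (e i), fun i => Pi.single (e i) 1, fun i => isStabilizerState_single _, ?_⟩
  rw [e.sum_comp fun y => ψ y • Pi.single y (1 : ℂ)]
  simp_rw [← Pi.single_smul', smul_eq_mul, mul_one]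
  exact (Finset.univ_sum_single ψ).symm

theorem _root_.Submodule.mem_of_infinite_setOf_sum_pow_smul_mem {K M : Type*} [Field K]
    [AddCommGroup M] [Module K M] (V : Submodule K M) {n : ℕ} (u : Fin n → M)
    (h : {a : K | ∑ k : Fin n, a ^ (k : ℕ) • u k ∈ V}.Infinite) (k : Fin n) : u k ∈ V := by
  let a : Fin n → K := fun j => h.natEmbedding _ j
  have ha : Function.Injective a := fun i j hij =>
    Fin.val_injective ((h.natEmbedding _).injective (Subtype.val_injective hij))
  have hmem : ∀ j, ∑ l, Matrix.vandermonde a j l • u l ∈ V := fun j => (h.natEmbedding _ j).2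
  have hdet : IsUnit (Matrix.vandermonde a).det :=
    isUnit_iff_ne_zero.mpr (Matrix.det_vandermonde_ne_zero_iff.mpr ha)
  have key : u k = ∑ j, (Matrix.vandermonde a)⁻¹ k j • ∑ l, Matrix.vandermonde a j l • u l := by
    simp_rw [Finset.smul_sum, smul_smul]
    rw [Finset.sum_comm]
    simp_rw [← Finset.sum_smul, ← Matrix.mul_apply, Matrix.nonsing_inv_mul _ hdet, Matrix.one_apply,
      ite_smul, one_smul, zero_smul, Finset.sum_ite_eq, Finset.mem_univ, if_true]
  rw [key]
  exact V.sum_mem fun j _ => V.smul_mem _ (hmem j)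

def psiSqCoeff (k : Fin 3) : F2 4 → ℂ := fun x =>
  if ¬(x 0 = 1 ∧ x 1 = 1) ∧ ¬(x 2 = 1 ∧ x 3 = 1) ∧ ∑ i, (x i).val = k then 1 else 0

theorem tensor2_psiAlpha_self (α : ℂ) :
    tensor2 (psiAlpha α) (psiAlpha α) = ∑ k : Fin 3, α ^ (k : ℕ) • psiSqCoeff k := by
  funext x
  have h01 (a : ZMod 2) : a = 0 ∨ a = 1 := by revert a; decide
  simp only [tensor2, psiAlpha, psiSqCoeff, Finset.sum_apply, Pi.smul_apply, Fin.sum_univ_three,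
    Fin.sum_univ_four]
  rcases h01 (x 0) with h0 | h0 <;> rcases h01 (x 1) with h1 | h1 <;>
    rcases h01 (x 2) with h2 | h2 <;> rcases h01 (x 3) with h3 | h3 <;>
    simp [h0, h1, h2, h3, ZMod.val_one, sq, Fin.castAdd, Fin.natAdd]

theorem psiSqCoeff_linearIndependent : LinearIndependent ℂ psiSqCoeff := by
  rw [Fintype.linearIndependent_iff]
  intro c hc
  have h0 := congrFun hc ![0, 0, 0, 0]
  have h1 := congrFun hc ![0, 0, 0, 1]
  have h2 := congrFun hc ![0, 1, 0, 1]
  simp [psiSqCoeff, Fin.sum_univ_three, Fin.sum_univ_four, ZMod.val_one] at h0 h1 h2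
  intro k
  fin_cases k <;> simp_all

theorem IsStabilizerState.apply_eq_zero_of_mem_span_psiSqCoeff {σ : F2 4 → ℂ}
    (hσ : IsStabilizerState σ) (hmem : σ ∈ span ℂ (Set.range psiSqCoeff)) :
    σ ![0, 0, 0, 1] = 0 := by
  obtain ⟨c, rfl⟩ := (mem_span_range_iff_exists_fun ℂ).mp hmem
  by_contra h
  have := hσ.apply_add_add_ne_zero (y := ![0, 0, 1, 0]) (z := ![0, 1, 0, 0]) h
  simp [psiSqCoeff, Fin.sum_univ_three, Fin.sum_univ_four, ZMod.val_one] at h this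
  exact h this

theorem not_forall_psiSqCoeff_mem_span {r : ℕ} (hr : r ≤ 3) {σ : Fin r → F2 4 → ℂ}
    (hσ : ∀ i, IsStabilizerState (σ i)) : ¬∀ k, psiSqCoeff k ∈ span ℂ (Set.range σ) := by
  intro hk
  have hle : span ℂ (Set.range psiSqCoeff) ≤ span ℂ (Set.range σ) :=
    span_le.mpr (Set.range_subset_iff.mpr hk)
  have heq : span ℂ (Set.range psiSqCoeff) = span ℂ (Set.range σ) := by
    refine eq_of_le_of_finrank_le hle ?_
    rw [finrank_span_eq_card psiSqCoeff_linearIndependent]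
    exact (finrank_range_le_card σ).trans ((Fintype.card_fin r).trans_le hr)
  have hker : span ℂ (Set.range σ) ≤ LinearMap.ker (LinearMap.proj ![0, 0, 0, 1]) :=
    span_le.mpr <| Set.range_subset_iff.mpr fun i =>
      (hσ i).apply_eq_zero_of_mem_span_psiSqCoeff (heq ▸ subset_span ⟨i, rfl⟩)
  simpa [psiSqCoeff, Fin.sum_univ_four, ZMod.val_one] using hker (hk 1)

theorem finite_setOf_tensor2_psiAlpha_mem_span {r : ℕ} (hr : r ≤ 3) {σ : Fin r → F2 4 → ℂ}
    (hσ : ∀ i, IsStabilizerState (σ i)) :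
    {α : ℂ | tensor2 (psiAlpha α) (psiAlpha α) ∈ span ℂ (Set.range σ)}.Finite := by
  simp_rw [tensor2_psiAlpha_self]
  by_contra h
  exact not_forall_psiSqCoeff_mem_span hr hσ
    ((span ℂ _).mem_of_infinite_setOf_sum_pow_smul_mem _ h)

/-- The set of nonzero `α ∈ ℂ` with `χ(ψ_α ⊗ ψ_α) < 4` is finite. -/
theorem psiAlpha_submultiplicative_finite :
    {α : ℂ | α ≠ 0 ∧ stabRank (tensor2 (psiAlpha α) (psiAlpha α)) < 4}.Finite := by
  have hdecomp : ∀ r, {σ : Fin r → F2 4 → ℂ | ∀ i, IsStabilizerState (σ i)}.Finite := fun r =>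
    Set.Finite.pi' fun _ => setOf_isStabilizerState_finite 4
  refine ((Set.finite_le_nat 3).biUnion fun r hr => (hdecomp r).biUnion fun σ hσ =>
    finite_setOf_tensor2_psiAlpha_mem_span hr hσ).subset ?_
  rintro α ⟨-, hα⟩
  obtain ⟨c, σ, hσ, hψ⟩ := exists_sum_eq_of_stabRank (tensor2 (psiAlpha α) (psiAlpha α))
  simp only [Set.mem_iUnion]
  exact ⟨_, Nat.le_of_lt_succ hα, σ, hσ, (mem_span_range_iff_exists_fun ℂ).mpr ⟨c, hψ.symm⟩⟩

end StabPaper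
end
end

section
/- Let n and r be positive integers. If there exist n+1 pairwise non-proportional nonzero vectors ψ₁,…,ψ_{n+1} ∈ ℂ² with χ(ψ_i^{⊗n}) ≤ r for all i, then χ_n ≤ r·(n+1). Similarly, if there exist n+1 pairwise non-proportional nonzero vectors ψ₁,…,ψ_{n+1} ∈ ℂ² with χℝ(ψ_i^{⊗n}) ≤ r for all i, then χ_nℝ ≤ r·(n+1). -/
open scoped BigOperators Classical

noncomputable section

namespace StabPaper

/-!
A tensor power `ψ^{⊗n}` takes the value `ψ(1)^w ψ(0)^(n-w)` at a bitstring of Hamming weight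
`w`, so it is the pull-back along the weight map of a row of a projective Vandermonde matrix.
For `n + 1` pairwise non-proportional `ψᵢ` that matrix has nonzero determinant, hence every
`ψ^{⊗n}` is a linear combination of the `ψᵢ^{⊗n}`. Stabilizer rank is subadditive under linear
combinations, which gives the bound `r·(n+1)` for every `ψ`.
-/

section CombinationRank

variable (K : Type*) {V : Type*} [Semiring K] [AddCommMonoid V] [Module K V]

/-- `stabRank` and `realStabRank` are, definitionally, `combinationRank ℂ` of the sets of
(real) stabilizer state vectors. -/
def combinationRank (S : Set V) (v : V) : ℕ :=
  sInf {r : ℕ | ∃ (c : Fin r → K) (σ : Fin r → V), (∀ i, σ i ∈ S) ∧ v = ∑ i, c i • σ i}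

variable {K}

theorem combinationRank_sum_smul_le_card {S : Set V} {ι : Type*} [Fintype ι] (c : ι → K)
    (σ : ι → V) (hσ : ∀ i, σ i ∈ S) :
    combinationRank K S (∑ i, c i • σ i) ≤ Fintype.card ι := by
  let e := Fintype.equivFin ι
  exact Nat.sInf_le ⟨c ∘ e.symm, σ ∘ e.symm, fun i => hσ _,
    (e.symm.sum_comp fun i => c i • σ i).symm⟩

theorem exists_eq_sum_smul_of_mem_span {S : Set V} {v : V} (hv : v ∈ Submodule.span K S) :
    ∃ (c : Fin (combinationRank K S v) → K) (σ : Fin (combinationRank K S v) → V),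
      (∀ i, σ i ∈ S) ∧ v = ∑ i, c i • σ i := by
  obtain ⟨r, c, σ, hv⟩ := Submodule.mem_span_set'.mp hv
  exact Nat.sInf_mem (s := {r : ℕ | ∃ (c : Fin r → K) (σ : Fin r → V), (∀ i, σ i ∈ S) ∧
    v = ∑ i, c i • σ i}) ⟨r, c, fun i => σ i, fun i => (σ i).2, hv.symm⟩

theorem combinationRank_sum_smul_le {S : Set V} {ι : Type*} [Fintype ι] (t : ι → K)
    {v : ι → V} (hv : ∀ i, v i ∈ Submodule.span K S) :
    combinationRank K S (∑ i, t i • v i) ≤ ∑ i, combinationRank K S (v i) := by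
  choose c σ hσ hv using fun i => exists_eq_sum_smul_of_mem_span (hv i)
  have hsum : ∑ i, t i • v i =
      ∑ p : Σ i, Fin (combinationRank K S (v i)), (t p.1 * c p.1 p.2) • σ p.1 p.2 := by
    rw [Fintype.sum_sigma]
    refine Fintype.sum_congr _ _ fun i => (congrArg (t i • ·) (hv i)).trans ?_
    simp only [Finset.smul_sum, smul_smul]
  calc combinationRank K S (∑ i, t i • v i)
      ≤ Fintype.card (Σ i, Fin (combinationRank K S (v i))) :=
        hsum ▸ combinationRank_sum_smul_le_card _ _ fun p => hσ p.1 p.2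
    _ = ∑ i, combinationRank K S (v i) := by simp

end CombinationRank

theorem zmod_two_eq_zero_or_eq_one (z : ZMod 2) : z = 0 ∨ z = 1 := by
  revert z; decide

theorem isRealStabilizerState_single {n : ℕ} (x₀ : F2 n) :
    IsRealStabilizerState (Pi.single x₀ 1 : F2 n → ℂ) := by
  refine ⟨{x₀}, fun _ => 0, ⟨⟨x₀, rfl⟩, ?_⟩, ⟨rfl, by simp⟩, fun x => ?_⟩
  · rintro x hx y hy z hz
    rw [Set.mem_singleton_iff] at hx hy hz ⊢
    rw [hx, hy, hz]
    funext i
    show x₀ i + x₀ i + x₀ i = x₀ i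
    rcases zmod_two_eq_zero_or_eq_one (x₀ i) with h | h <;> rw [h] <;> decide
  · by_cases hx : x = x₀ <;> simp [hx]

theorem IsRealStabilizerState.isStabilizerState {n : ℕ} {σ : F2 n → ℂ}
    (h : IsRealStabilizerState σ) : IsStabilizerState σ := by
  obtain ⟨A, q, hA, hq, hσ⟩ := h
  exact ⟨A, fun _ => 0, q, hA, fun _ _ => by simp, hq, fun x => by simpa using hσ x⟩

theorem span_setOf_isRealStabilizerState (n : ℕ) :
    Submodule.span ℂ {σ : F2 n → ℂ | IsRealStabilizerState σ} = ⊤ := by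
  refine eq_top_mono (Submodule.span_mono ?_) (Pi.basisFun ℂ (F2 n)).span_eq
  rintro _ ⟨x₀, rfl⟩
  simpa using isRealStabilizerState_single x₀

theorem span_setOf_isStabilizerState (n : ℕ) :
    Submodule.span ℂ {σ : F2 n → ℂ | IsStabilizerState σ} = ⊤ :=
  eq_top_mono (Submodule.span_mono fun _ => IsRealStabilizerState.isStabilizerState)
    (span_setOf_isRealStabilizerState n)

def hammingWeight {n : ℕ} (x : F2 n) : Fin (n + 1) :=
  ⟨hammingNorm x, Nat.lt_succ_of_le (hammingNorm_le_card_fintype.trans_eq (Fintype.card_fin n))⟩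

theorem tensorPow_apply {n : ℕ} (ψ : ZMod 2 → ℂ) (x : F2 n) :
    tensorPow ψ n x = ψ 1 ^ (hammingWeight x : ℕ) * ψ 0 ^ ((hammingWeight x).rev : ℕ) := by
  have hψ : ∀ i, ψ (x i) = if x i ≠ 0 then ψ 1 else ψ 0 := fun i => by
    rcases zmod_two_eq_zero_or_eq_one (x i) with h | h <;> simp [h]
  have hrev : ((hammingWeight x).rev : ℕ) = (Finset.univ.filter fun i => ¬x i ≠ 0).card := by
    have := Finset.card_filter_add_card_filter_not (s := Finset.univ) fun i => x i ≠ 0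
    simp only [Finset.card_univ, Fintype.card_fin] at this
    simp only [Fin.val_rev, hammingWeight, hammingNorm]
    omega
  rw [tensorPow, Finset.prod_congr rfl fun i _ => hψ i, Finset.prod_ite, Finset.prod_const,
    Finset.prod_const, hrev]
  rfl

theorem exists_eq_smul_of_mul_eq_mul {K : Type*} [Field K] {φ χ : ZMod 2 → K} (hχ : χ ≠ 0)
    (h : φ 0 * χ 1 = φ 1 * χ 0) : ∃ c : K, φ = c • χ := by
  by_cases h₀ : χ 0 = 0
  · have h₁ : χ 1 ≠ 0 := fun h₁ => hχ <| funext fun z => by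
      rcases zmod_two_eq_zero_or_eq_one z with rfl | rfl <;> assumption
    refine ⟨φ 1 / χ 1, funext fun z => ?_⟩
    rcases zmod_two_eq_zero_or_eq_one z with rfl | rfl
    · simp_all
    · simp [h₁]
  · refine ⟨φ 0 / χ 0, funext fun z => ?_⟩
    rcases zmod_two_eq_zero_or_eq_one z with rfl | rfl
    · simp [h₀]
    · simp only [Pi.smul_apply, smul_eq_mul]
      field_simp
      linear_combination -h

theorem exists_tensorPow_eq_sum_smul {n : ℕ} {ψ : Fin (n + 1) → ZMod 2 → ℂ}
    (hψ : Pairwise fun i j => ∀ c : ℂ, ψ i ≠ c • ψ j) (φ : ZMod 2 → ℂ) :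
    ∃ t : Fin (n + 1) → ℂ, tensorPow φ n = ∑ i, t i • tensorPow (ψ i) n := by
  have hM : IsUnit (Matrix.projVandermonde (fun i => ψ i 1) (fun i => ψ i 0)) := by
    rw [Matrix.isUnit_iff_isUnit_det, isUnit_iff_ne_zero, Matrix.det_projVandermonde]
    refine Finset.prod_ne_zero_iff.mpr fun i _ => Finset.prod_ne_zero_iff.mpr fun j hj hdet => ?_
    have hij : i ≠ j := (Finset.mem_Ioi.mp hj).ne
    have hψj : ψ j ≠ 0 := by simpa using hψ hij.symm 0
    obtain ⟨c, hc⟩ := exists_eq_smul_of_mul_eq_mul (φ := ψ i) hψj (by linear_combination hdet)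
    exact hψ hij c hc
  obtain ⟨t, ht⟩ := Matrix.vecMul_surjective_iff_isUnit.mpr hM
    fun k => φ 1 ^ (k : ℕ) * φ 0 ^ (k.rev : ℕ)
  refine ⟨t, funext fun x => ?_⟩
  simpa [tensorPow_apply, Matrix.vecMul, dotProduct, Matrix.projVandermonde_apply] using
    (congrFun ht (hammingWeight x)).symm

theorem combinationRank_tensorPow_le {n r : ℕ} {S : Set (F2 n → ℂ)}
    (hS : Submodule.span ℂ S = ⊤) {ψ : Fin (n + 1) → ZMod 2 → ℂ}
    (hψ : Pairwise fun i j => ∀ c : ℂ, ψ i ≠ c • ψ j)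
    (hr : ∀ i, combinationRank ℂ S (tensorPow (ψ i) n) ≤ r) (φ : ZMod 2 → ℂ) :
    combinationRank ℂ S (tensorPow φ n) ≤ r * (n + 1) := by
  obtain ⟨t, ht⟩ := exists_tensorPow_eq_sum_smul hψ φ
  calc combinationRank ℂ S (tensorPow φ n)
      ≤ ∑ i, combinationRank ℂ S (tensorPow (ψ i) n) :=
        ht ▸ combinationRank_sum_smul_le t fun _ => hS ▸ Submodule.mem_top
    _ ≤ ∑ _i : Fin (n + 1), r := Finset.sum_le_sum fun i _ => hr i
    _ = r * (n + 1) := by simp [mul_comm]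

theorem genStabRank_from_finitely_many_general (n r : ℕ) :
    ((∃ ψ : Fin (n + 1) → (ZMod 2 → ℂ),
        (∀ i, ψ i ≠ 0) ∧
        (∀ i j, i ≠ j → ∀ c : ℂ, ψ i ≠ c • ψ j) ∧
        (∀ i, stabRank (tensorPow (ψ i) n) ≤ r)) →
      genStabRank n ≤ r * (n + 1)) ∧
    ((∃ ψ : Fin (n + 1) → (ZMod 2 → ℂ),
        (∀ i, ψ i ≠ 0) ∧
        (∀ i j, i ≠ j → ∀ c : ℂ, ψ i ≠ c • ψ j) ∧
        (∀ i, realStabRank (tensorPow (ψ i) n) ≤ r)) →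
      genRealStabRank n ≤ r * (n + 1)) := by
  constructor
  · rintro ⟨ψ, -, hψ, hr⟩
    refine csSup_le' ?_
    rintro _ ⟨φ, -, rfl⟩
    exact combinationRank_tensorPow_le (span_setOf_isStabilizerState n) hψ hr φ
  · rintro ⟨ψ, -, hψ, hr⟩
    refine csSup_le' ?_
    rintro _ ⟨φ, -, rfl⟩
    exact combinationRank_tensorPow_le (span_setOf_isRealStabilizerState n) hψ hr φ

/-- If there exist `n+1` pairwise non-proportional nonzero vectors `ψᵢ ∈ ℂ²` with
`χ(ψᵢ^{⊗n}) ≤ r` for all `i`, then `χ_n ≤ r·(n+1)`; and likewise for the real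
stabilizer rank and `χ_nℝ`. -/
theorem genStabRank_from_finitely_many (n r : ℕ) (hn : 1 ≤ n) (hr : 1 ≤ r) :
    ((∃ ψ : Fin (n + 1) → (ZMod 2 → ℂ),
        (∀ i, ψ i ≠ 0) ∧
        (∀ i j, i ≠ j → ∀ c : ℂ, ψ i ≠ c • ψ j) ∧
        (∀ i, stabRank (tensorPow (ψ i) n) ≤ r)) →
      genStabRank n ≤ r * (n + 1)) ∧
    ((∃ ψ : Fin (n + 1) → (ZMod 2 → ℂ),
        (∀ i, ψ i ≠ 0) ∧
        (∀ i j, i ≠ j → ∀ c : ℂ, ψ i ≠ c • ψ j) ∧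
        (∀ i, realStabRank (tensorPow (ψ i) n) ≤ r)) →
      genRealStabRank n ≤ r * (n + 1)) :=
  genStabRank_from_finitely_many_general n r

end StabPaper
end
end
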